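/- Let M be a symmetric 3×3 complex matrix, σ = (σ₁,σ₂,σ₃)ᵗ ∈ ℂ³, and μ ∈ ℂ with μ ≠ 0. Then the two conditions adj(M) = −μ²·σ·σᵗ and M·σ = 0 hold simultaneously if and only if the matrix M + μ·A(σ) has rank at most 1, where A(σ) is the skew-symmetric matrix with rows (0,−σ₃,σ₂), (σ₃,0,−σ₁), (−σ₂,σ₁,0). (Equivalently: for λ ≠ 0, the fiber over λ of the family defined by M† = λ·σσᵗ, Mσ = 0 is the rank ≤ 1 locus, a Segre-embedded ℙ²×ℙ².) -/
import Mathlib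

open Matrix

noncomputable section

/-- The skew-symmetric (cross-product) 3×3 matrix `A(σ)` associated to a vector
`σ = (σ₁,σ₂,σ₃)ᵗ`, with rows `(0,−σ₃,σ₂)`, `(σ₃,0,−σ₁)`, `(−σ₂,σ₁,0)`. -/
def crossMat (v : Fin 3 → ℂ) : Matrix (Fin 3) (Fin 3) ℂ :=
  !![0, -v 2, v 1; v 2, 0, -v 0; -v 1, v 0, 0]

lemma rank_le_one_iff_exists (N : Matrix (Fin 3) (Fin 3) ℂ) :
    N.rank ≤ 1 ↔ ∃ u w : Fin 3 → ℂ, N = vecMulVec u w := by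
  constructor
  · intro h
    rw [Matrix.rank] at h
    obtain ⟨v, hv⟩ := (finrank_le_one_iff (K := ℂ) (V := LinearMap.range N.mulVecLin)).mp h
    choose c hc using hv
    refine ⟨(v : Fin 3 → ℂ), fun j => c ⟨N *ᵥ Pi.single j 1, ⟨Pi.single j 1, rfl⟩⟩, ?_⟩
    ext i j
    have h2 := congrFun (congrArg (Subtype.val) (hc ⟨N *ᵥ Pi.single j 1, ⟨Pi.single j 1, rfl⟩⟩)) i
    simp only [Submodule.coe_smul, Pi.smul_apply, smul_eq_mul] at h2
    rw [vecMulVec_apply, mul_comm, h2, mulVec_single]; simp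
  · rintro ⟨u, w, rfl⟩
    rw [vecMulVec_eq (Fin 1)]
    exact (Matrix.rank_mul_le_left _ _).trans ((Matrix.rank_le_card_width _).trans (by simp))

lemma exists_of_adjugate_eq_zero (N : Matrix (Fin 3) (Fin 3) ℂ) (h : N.adjugate = 0) :
    ∃ u w : Fin 3 → ℂ, N = vecMulVec u w := by
  by_cases hN : N = 0
  · exact ⟨0, 0, by ext i j; simp [hN, vecMulVec_apply]⟩
  · have hex : ∃ a b, N a b ≠ 0 := by
      by_contra hc
      push_neg at hc
      exact hN (by ext a b; simpa using hc a b)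
    obtain ⟨a, b, hab⟩ := hex
    rw [adjugate_fin_three, ← Matrix.ext_iff] at h
    have e00 := h 0 0
    have e01 := h 0 1
    have e02 := h 0 2
    have e10 := h 1 0
    have e11 := h 1 1
    have e12 := h 1 2
    have e20 := h 2 0
    have e21 := h 2 1
    have e22 := h 2 2
    simp only [Matrix.cons_val', Matrix.cons_val_zero, Matrix.cons_val_one, Matrix.head_cons,
      Matrix.empty_val', Matrix.cons_val_fin_one, Matrix.head_fin_const, Matrix.zero_apply,
      Matrix.of_apply, Matrix.cons_val_two, Matrix.tail_cons, sub_eq_zero,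
      neg_add_eq_zero] at e00 e01 e02 e10 e11 e12 e20 e21 e22
    refine ⟨fun i => N i b, fun j => N a j / N a b, ?_⟩
    ext i j
    rw [vecMulVec_apply, mul_div_assoc', eq_div_iff hab]
    have tri : ∀ k : Fin 3, k = 0 ∨ k = 1 ∨ k = 2 := by decide
    rcases tri i with rfl|rfl|rfl <;> rcases tri j with rfl|rfl|rfl <;>
      rcases tri a with rfl|rfl|rfl <;> rcases tri b with rfl|rfl|rfl <;>
      first
        | ring1
        | linear_combination e00 | linear_combination -e00
        | linear_combination e01 | linear_combination -e01
        | linear_combination e02 | linear_combination -e02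
        | linear_combination e10 | linear_combination -e10
        | linear_combination e11 | linear_combination -e11
        | linear_combination e12 | linear_combination -e12
        | linear_combination e20 | linear_combination -e20
        | linear_combination e21 | linear_combination -e21
        | linear_combination e22 | linear_combination -e22

/-- Let `M` be a symmetric 3×3 complex matrix, `σ ∈ ℂ³` and `μ ∈ ℂ` with `μ ≠ 0`.
Then `adj(M) = −μ²·σ·σᵗ` and `M·σ = 0` hold simultaneously if and only if
`M + μ·A(σ)` has rank at most 1.  (For `λ ≠ 0` the fiber of the family
`M† = λ·σσᵗ, Mσ = 0` is the rank ≤ 1 locus, a Segre-embedded `ℙ²×ℙ²`.) -/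
theorem adjugate_eq_and_mulVec_eq_zero_iff_rank_le_one
    (M : Matrix (Fin 3) (Fin 3) ℂ) (hM : M.IsSymm) (σ : Fin 3 → ℂ) (μ : ℂ) (hμ : μ ≠ 0) :
    (M.adjugate = (-(μ ^ 2)) • vecMulVec σ σ ∧ M *ᵥ σ = 0) ↔
      (M + μ • crossMat σ).rank ≤ 1 := by
  have tri : ∀ k : Fin 3, k = 0 ∨ k = 1 ∨ k = 2 := by decide
  constructor
  · rintro ⟨h1, h2⟩
    have hs := fun i j => Matrix.ext_iff.mpr hM i j
    simp only [Matrix.transpose_apply] at hs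
    have hs10 : M 1 0 = M 0 1 := hs 0 1
    have hs20 : M 2 0 = M 0 2 := hs 0 2
    have hs21 : M 2 1 = M 1 2 := hs 1 2
    have hL0 := congrFun h2 0
    have hL1 := congrFun h2 1
    have hL2 := congrFun h2 2
    simp only [Matrix.mulVec, dotProduct, Fin.sum_univ_three, Pi.zero_apply,
      hs10, hs20, hs21] at hL0 hL1 hL2
    rw [adjugate_fin_three, ← Matrix.ext_iff] at h1
    have hG00 := h1 0 0
    have hG01 := h1 0 1
    have hG02 := h1 0 2
    have hG11 := h1 1 1
    have hG12 := h1 1 2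
    have hG22 := h1 2 2
    simp only [Matrix.cons_val', Matrix.cons_val_zero, Matrix.cons_val_one, Matrix.head_cons,
      Matrix.empty_val', Matrix.cons_val_fin_one, Matrix.head_fin_const, Matrix.of_apply,
      Matrix.cons_val_two, Matrix.tail_cons, Matrix.smul_apply, Matrix.vecMulVec_apply,
      smul_eq_mul, hs10, hs20, hs21] at hG00 hG01 hG02 hG11 hG12 hG22
    refine (rank_le_one_iff_exists _).mpr (exists_of_adjugate_eq_zero _ ?_)
    rw [adjugate_fin_three, ← Matrix.ext_iff]
    intro i j
    rcases tri i with rfl|rfl|rfl <;> rcases tri j with rfl|rfl|rfl <;>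
      simp only [Matrix.cons_val', Matrix.cons_val_zero, Matrix.cons_val_one, Matrix.head_cons,
        Matrix.empty_val', Matrix.cons_val_fin_one, Matrix.head_fin_const, Matrix.of_apply,
        Matrix.cons_val_two, Matrix.tail_cons, Matrix.add_apply, Matrix.smul_apply, crossMat,
        Matrix.zero_apply, smul_eq_mul, hs10, hs20, hs21]
    · linear_combination hG00
    · linear_combination hG01 + μ * hL2
    · linear_combination hG02 - μ * hL1
    · linear_combination hG01 - μ * hL2
    · linear_combination hG11
    · linear_combination hG12 + μ * hL0
    · linear_combination hG02 + μ * hL1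
    · linear_combination hG12 - μ * hL0
    · linear_combination hG22
  · intro h
    obtain ⟨u, w, hN⟩ := (rank_le_one_iff_exists _).mp h
    have hMe : M = vecMulVec u w - μ • crossMat σ := eq_sub_of_add_eq hN
    subst hMe
    have hs := fun i j => Matrix.ext_iff.mpr hM i j
    have hS01 := (hs 0 1).symm
    have hS02 := (hs 0 2).symm
    have hS12 := (hs 1 2).symm
    simp only [Matrix.transpose_apply, Matrix.sub_apply, Matrix.smul_apply,
      Matrix.vecMulVec_apply, crossMat, Matrix.cons_val', Matrix.cons_val_zero,
      Matrix.cons_val_one, Matrix.head_cons, Matrix.empty_val', Matrix.cons_val_fin_one,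
      Matrix.head_fin_const, Matrix.of_apply, Matrix.cons_val_two, Matrix.tail_cons,
      smul_eq_mul] at hS01 hS02 hS12
    have h2mu : (2 : ℂ) * μ ≠ 0 := mul_ne_zero two_ne_zero hμ
    constructor
    · rw [adjugate_fin_three, ← Matrix.ext_iff]
      intro i j
      rcases tri i with rfl|rfl|rfl <;> rcases tri j with rfl|rfl|rfl <;>
        simp only [Matrix.cons_val', Matrix.cons_val_zero, Matrix.cons_val_one, Matrix.head_cons,
          Matrix.empty_val', Matrix.cons_val_fin_one, Matrix.head_fin_const, Matrix.of_apply,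
          Matrix.cons_val_two, Matrix.tail_cons, Matrix.sub_apply, Matrix.smul_apply, crossMat,
          Matrix.vecMulVec_apply, Matrix.zero_apply, smul_eq_mul]
      · linear_combination (σ 0*μ)*hS12
      · linear_combination (-1/2 : ℂ)*(u 2*w 2)*hS01 - (σ 0*μ)*hS02 + (1/2 : ℂ)*(u 2*w 1)*hS02 + (-1/2 : ℂ)*(u 2*w 0)*hS12
      · linear_combination (σ 0*μ)*hS01 + (1/2 : ℂ)*(u 1*w 2)*hS01 + (-1/2 : ℂ)*(u 1*w 1)*hS02 + (1/2 : ℂ)*(u 1*w 0)*hS12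
      · linear_combination (1/2 : ℂ)*(u 2*w 2)*hS01 + (-1/2 : ℂ)*(u 2*w 1)*hS02 + (σ 1*μ)*hS12 + (1/2 : ℂ)*(u 2*w 0)*hS12
      · linear_combination -((σ 1*μ)*hS02)
      · linear_combination (-1/2 : ℂ)*(u 2*w 0)*hS01 - (σ 2*μ)*hS02 + (1/2 : ℂ)*(u 1*w 0)*hS02 + (-1/2 : ℂ)*(u 0*w 0)*hS12
      · linear_combination (-1/2 : ℂ)*(u 1*w 2)*hS01 + (1/2 : ℂ)*(u 1*w 1)*hS02 + (σ 2*μ)*hS12 + (-1/2 : ℂ)*(u 1*w 0)*hS12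
      · linear_combination (σ 1*μ)*hS01 + (1/2 : ℂ)*(u 2*w 0)*hS01 + (-1/2 : ℂ)*(u 1*w 0)*hS02 + (1/2 : ℂ)*(u 0*w 0)*hS12
      · linear_combination (σ 2*μ)*hS01
    · funext k
      rcases tri k with rfl|rfl|rfl <;>
        simp only [Matrix.mulVec, dotProduct, Fin.sum_univ_three, Pi.zero_apply,
          Matrix.sub_apply, Matrix.smul_apply, Matrix.vecMulVec_apply, crossMat,
          Matrix.cons_val', Matrix.cons_val_zero, Matrix.cons_val_one, Matrix.head_cons,
          Matrix.empty_val', Matrix.cons_val_fin_one, Matrix.head_fin_const, Matrix.of_apply,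
          Matrix.cons_val_two, Matrix.tail_cons, smul_eq_mul]
      · refine mul_left_cancel₀ h2mu ?_
        rw [mul_zero]
        linear_combination (2 : ℂ)*(σ 1*μ)*hS01 + (u 2*w 0)*hS01 + (2 : ℂ)*(σ 2*μ)*hS02 - (u 1*w 0)*hS02 + (u 0*w 0)*hS12
      · refine mul_left_cancel₀ h2mu ?_
        rw [mul_zero]
        linear_combination (u 1*w 2)*hS01 - (u 1*w 1)*hS02 + (u 1*w 0)*hS12
      · refine mul_left_cancel₀ h2mu ?_
        rw [mul_zero]
        linear_combination (u 2*w 2)*hS01 - (u 2*w 1)*hS02 + (u 2*w 0)*hS12
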